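/- arXiv:1202.4897 — 2 statements merged into one kernel-verified Lean document; each statement's English description precedes it below -/
import Mathlib

section
/- Let α, β ∈ ℂ with |α| = |β| and αβ ≠ 0, set A = [[0, α], [β, 0]] and Ā = [[0, −conj(β)], [−conj(α), 0]], and let μ ∈ ℂ satisfy μ² = αβ. Then for ω ∈ ℂ, the matrix exp(−2ω·A − 2·conj(ω)·Ā) equals the identity matrix if and only if ωμ − conj(ω)·conj(μ) ∈ πi·ℤ (equivalently, Im(ωμ) ∈ (π/2)·ℤ). -/
/-!
Writing `M = -2ω A - 2ω̄ Ā`, a direct computation using `|α| = |β|` and `μ² = αβ` gives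
`M² = θ² • 1` with `θ = 2(ωμ - ω̄μ̄)`. Summing the even and odd parts of the exponential series
then gives `exp M = cosh θ • 1 + (sinh θ / θ) • M` for `θ ≠ 0`. If `exp M = 1`, squaring
`(sinh θ / θ) • M = (1 - cosh θ) • 1` gives `sinh² θ = (1 - cosh θ)²`, which together with
`cosh² θ - sinh² θ = 1` forces `cosh θ = 1` and `sinh θ = 0`, i.e. `exp θ = 1`, i.e. `θ ∈ 2πiℤ`.
If `θ = 0`, the entries `z` and `-z̄` of `M / (-2)` satisfy `-|z|² = 0`, so `M = 0`.
-/

open Complex Matrix Real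
open ComplexConjugate

theorem Complex.exp_eq_one_iff_cosh_eq_one_and_sinh_eq_zero (z : ℂ) :
    Complex.exp z = 1 ↔ cosh z = 1 ∧ sinh z = 0 := by
  refine ⟨fun h => ?_, fun ⟨hc, hs⟩ => by rw [← cosh_add_sinh, hc, hs, add_zero]⟩
  have h' : Complex.exp (-z) = 1 := by rw [Complex.exp_neg, h, inv_one]
  rw [cosh, sinh, h, h']
  norm_num

section ExpOfSquareScalar

open NormedSpace

variable {𝔸 : Type*} [Ring 𝔸] [Algebra ℂ 𝔸] [TopologicalSpace 𝔸] [IsTopologicalRing 𝔸]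
  [ContinuousSMul ℂ 𝔸] [T2Space 𝔸]

theorem exp_eq_cosh_smul_one_add_sinh_div_smul {x : 𝔸} {θ : ℂ} (hθ : θ ≠ 0)
    (hx : x ^ 2 = θ ^ 2 • (1 : 𝔸)) :
    exp x = cosh θ • (1 : 𝔸) + (sinh θ / θ) • x := by
  rw [exp_eq_tsum ℂ]
  refine HasSum.tsum_eq (HasSum.even_add_odd ?_ ?_)
  · convert (hasSum_cosh θ).smul_const (1 : 𝔸) using 2 with n
    rw [pow_mul, hx, smul_pow, one_pow, smul_smul, ← pow_mul, div_eq_inv_mul]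
  · convert ((hasSum_sinh θ).div_const θ).smul_const x using 2 with n
    rw [pow_succ, pow_mul, hx, smul_pow, one_pow, smul_one_mul, smul_smul, ← pow_mul, pow_succ]
    field_simp

theorem exp_eq_one_iff_of_sq_eq_smul_one [Nontrivial 𝔸] {x : 𝔸} {θ : ℂ} (hθ : θ ≠ 0)
    (hx : x ^ 2 = θ ^ 2 • (1 : 𝔸)) :
    exp x = 1 ↔ Complex.exp θ = 1 := by
  rw [exp_eq_cosh_smul_one_add_sinh_div_smul hθ hx,
    Complex.exp_eq_one_iff_cosh_eq_one_and_sinh_eq_zero]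
  constructor
  · intro h
    have hsx : (sinh θ / θ) • x = (1 - cosh θ) • (1 : 𝔸) := by
      rw [sub_smul, one_smul]
      exact eq_sub_of_add_eq' h
    have hsq : sinh θ ^ 2 = (1 - cosh θ) ^ 2 := by
      have := congrArg (· ^ 2) hsx
      simp only [smul_pow, hx, smul_smul, one_pow] at this
      have := smul_left_injective ℂ (one_ne_zero (α := 𝔸)) this
      field_simp at this
      exact this
    have hc : cosh θ = 1 := by
      linear_combination (1 / 2 : ℂ) * (hsq + Complex.cosh_sq_sub_sinh_sq θ)
    refine ⟨hc, (pow_eq_zero_iff two_ne_zero).mp ?_⟩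
    rw [hsq, hc, sub_self, zero_pow two_ne_zero]
  · rintro ⟨hc, hs⟩
    rw [hc, hs, zero_div, zero_smul, add_zero, one_smul]

end ExpOfSquareScalar

theorem Matrix.offDiag_fin_two_sq {R : Type*} [CommRing R] (b c : R) :
    !![0, b; c, 0] ^ 2 = (b * c) • (1 : Matrix (Fin 2) (Fin 2) R) := by
  ext i j
  fin_cases i <;> fin_cases j <;> simp [sq, mul_comm]

theorem mul_neg_conj_eq_sq_of_norm_eq {α β μ : ℂ} (hαβ : ‖α‖ = ‖β‖) (hμ : μ ^ 2 = α * β)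
    (ω : ℂ) :
    (ω * α - conj ω * conj β) * -conj (ω * α - conj ω * conj β) =
      (ω * μ - conj ω * conj μ) ^ 2 := by
  have hμ_norm : ‖μ‖ ^ 2 = ‖α‖ * ‖β‖ := by rw [← norm_pow, hμ, norm_mul]
  have hαα : α * conj α = ‖α‖ ^ 2 := mul_conj' α
  have hββ : β * conj β = ‖α‖ ^ 2 := by rw [mul_conj', hαβ]
  have hμμ : μ * conj μ = ‖α‖ ^ 2 := by
    rw [mul_conj', ← ofReal_pow, hμ_norm, hαβ, sq]
    push_cast
    ring
  have hμ' : conj μ ^ 2 = conj α * conj β := by rw [← map_pow, hμ, map_mul]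
  simp only [map_sub, map_mul, conj_conj]
  linear_combination (-ω * conj ω) * (hαα + hββ - 2 * hμμ) - ω ^ 2 * hμ - conj ω ^ 2 * hμ'

theorem vacuum_solution_period_criterion_general (α β μ : ℂ)
    (hαβ : ‖α‖ = ‖β‖) (hμ : μ ^ 2 = α * β)
    (A Abar : Matrix (Fin 2) (Fin 2) ℂ)
    (hA : A = !![0, α; β, 0])
    (hAbar : Abar = !![0, -(starRingEnd ℂ) β; -(starRingEnd ℂ) α, 0])
    (ω : ℂ) :
    NormedSpace.exp ((-2 * ω) • A + (-2 * (starRingEnd ℂ) ω) • Abar) = 1 ↔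
      ∃ n : ℤ, ω * μ - (starRingEnd ℂ) ω * (starRingEnd ℂ) μ = (π : ℂ) * Complex.I * n := by
  set t := ω * μ - conj ω * conj μ
  set z := ω * α - conj ω * conj β
  have hM : (-2 * ω) • A + (-2 * conj ω) • Abar = (-2 : ℂ) • !![0, z; -conj z, 0] := by
    subst hA hAbar
    ext i j
    fin_cases i <;> fin_cases j <;> simp [z] <;> ring
  have hz : z * -conj z = t ^ 2 := mul_neg_conj_eq_sq_of_norm_eq hαβ hμ ω
  have hM_sq : ((-2 : ℂ) • !![0, z; -conj z, 0]) ^ 2 = (2 * t) ^ 2 • (1 : Matrix _ _ ℂ) := by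
    rw [smul_pow, Matrix.offDiag_fin_two_sq, hz, smul_smul]
    ring_nf
  rw [hM]
  rcases eq_or_ne t 0 with ht | ht
  · have hz0 : z = 0 := by simpa [ht, mul_conj'] using hz
    have h0 : !![(0 : ℂ), 0; 0, 0] = 0 := (Matrix.eta_fin_two 0).symm
    rw [hz0, map_zero, neg_zero, h0, smul_zero, NormedSpace.exp_zero]
    exact iff_of_true rfl ⟨0, by simp [t, ht]⟩
  · rw [exp_eq_one_iff_of_sq_eq_smul_one (mul_ne_zero two_ne_zero ht) hM_sq,
      Complex.exp_eq_one_iff]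
    refine exists_congr fun n => ⟨fun hn => ?_, fun hn => ?_⟩
    · linear_combination hn / 2
    · linear_combination 2 * hn

theorem vacuum_solution_period_criterion (α β μ : ℂ)
    (hαβ : ‖α‖ = ‖β‖) (hne : α * β ≠ 0) (hμ : μ ^ 2 = α * β)
    (A Abar : Matrix (Fin 2) (Fin 2) ℂ)
    (hA : A = !![0, α; β, 0])
    (hAbar : Abar = !![0, -(starRingEnd ℂ) β; -(starRingEnd ℂ) α, 0])
    (ω : ℂ) :
    NormedSpace.exp ((-2 * ω) • A + (-2 * (starRingEnd ℂ) ω) • Abar) = 1 ↔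
      ∃ n : ℤ, ω * μ - (starRingEnd ℂ) ω * (starRingEnd ℂ) μ = (π : ℂ) * Complex.I * n :=
  vacuum_solution_period_criterion_general α β μ hαβ hμ A Abar hA hAbar ω
end

section
/- Let α, β ∈ ℂ, let p ∈ ℂ with p ≠ 0, let a, b ∈ ℂ and λ ∈ ℝ, and define f : ℂ → ℂ by f(z) = a·e^{2πi·Re(z·conj(p))} + b·e^{−2πi·Re(z·conj(p))}. Then f satisfies Δf + 8|α|²·f + 8α·conj(β)·conj(f) = −4λ·f identically on ℂ if and only if (4π²|p|² − 8|α|² − 4λ)·a = 8α·conj(β)·conj(b) and (4π²|p|² − 8|α|² − 4λ)·b = 8α·conj(β)·conj(a). -/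
/-!
The modes `e±(z) = exp(±2πi⟪p, z⟫)` are eigenfunctions of the Laplacian with eigenvalue
`-4π²|p|²`, and complex conjugation swaps them. Hence for `f = a e₊ + b e₋` the difference of the
two sides of the Jacobi equation is again a combination of `e₊` and `e₋`, whose coefficients are
exactly the differences of the two sides of the claimed identities. For `p ≠ 0` the modes are
linearly independent (compare their values at `0` and at a point where `⟪p, z⟫ = 1/4`).
-/

open Complex Real

open scoped ComplexConjugate

/-- The Laplacian `∂²f/∂x² + ∂²f/∂y²` of a function `f : ℂ → ℂ` of the real
coordinates `x, y` with `z = x + iy`: second derivatives along the directions `1` and `i`. -/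
noncomputable def laplacian (f : ℂ → ℂ) (z : ℂ) : ℂ :=
  fderiv ℝ (fun w => fderiv ℝ f w 1) z 1 +
    fderiv ℝ (fun w => fderiv ℝ f w Complex.I) z Complex.I

section LinearCombination

variable {E : Type*} [NormedAddCommGroup E] [NormedSpace ℝ E] {g h : E → ℂ}

theorem fderiv_linear_combination_apply (hg : Differentiable ℝ g) (hh : Differentiable ℝ h)
    (a b : ℂ) (z v : E) :
    fderiv ℝ (fun w => a * g w + b * h w) z v = a * fderiv ℝ g z v + b * fderiv ℝ h z v := by
  rw [(((hg z).hasFDerivAt.const_mul a).fun_add ((hh z).hasFDerivAt.const_mul b)).fderiv]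
  simp

theorem differentiable_fderiv_apply (hg : ContDiff ℝ 2 g) (v : E) :
    Differentiable ℝ (fun w => fderiv ℝ g w v) :=
  ((hg.fderiv_right (m := 1) (by norm_num)).clm_apply contDiff_const).differentiable one_ne_zero

end LinearCombination

theorem laplacian_linear_combination {g h : ℂ → ℂ} (hg : ContDiff ℝ 2 g) (hh : ContDiff ℝ 2 h)
    (a b z : ℂ) :
    laplacian (fun w => a * g w + b * h w) z = a * laplacian g z + b * laplacian h z := by
  have hdir (v : ℂ) : (fun w => fderiv ℝ (fun w => a * g w + b * h w) w v) =
      fun w => a * fderiv ℝ g w v + b * fderiv ℝ h w v := by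
    funext w
    exact fderiv_linear_combination_apply (hg.differentiable two_ne_zero)
      (hh.differentiable two_ne_zero) a b w v
  simp only [laplacian, hdir, fderiv_linear_combination_apply (differentiable_fderiv_apply hg _)
    (differentiable_fderiv_apply hh _)]
  ring

section ExpMode

variable {E : Type*} [NormedAddCommGroup E] [InnerProductSpace ℝ E]

noncomputable def expMode (c : ℂ) (p : E) (z : E) : ℂ :=
  cexp (c * (inner ℝ p z : ℝ))

theorem hasFDerivAt_expMode (c : ℂ) (p z : E) :
    HasFDerivAt (expMode c p)
      (expMode c p z • (c • (ofRealCLM.comp (innerSL ℝ p)))) z :=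
  ((ofRealCLM.comp (innerSL ℝ p)).hasFDerivAt.const_mul c).cexp

theorem fderiv_expMode_apply (c : ℂ) (p z v : E) :
    fderiv ℝ (expMode c p) z v = c * (inner ℝ p v : ℝ) * expMode c p z := by
  rw [(hasFDerivAt_expMode c p z).fderiv]
  simp only [smul_apply, ContinuousLinearMap.comp_apply, innerSL_apply_apply,
    ofRealCLM_apply, smul_eq_mul]
  ring

theorem fderiv_fderiv_expMode_apply (c : ℂ) (p z v : E) :
    fderiv ℝ (fun w => fderiv ℝ (expMode c p) w v) z v =
      (c * (inner ℝ p v : ℝ)) ^ 2 * expMode c p z := by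
  simp only [fderiv_expMode_apply]
  rw [fderiv_const_mul ((hasFDerivAt_expMode c p z).differentiableAt), smul_apply,
    fderiv_expMode_apply, smul_eq_mul]
  ring

theorem contDiff_expMode (c : ℂ) (p : E) {n : WithTop ℕ∞} : ContDiff ℝ n (expMode c p) :=
  (contDiff_const.mul (ofRealCLM.contDiff.comp (innerSL ℝ p).contDiff)).cexp

theorem conj_expMode (c : ℂ) (p z : E) : conj (expMode c p z) = expMode (conj c) p z := by
  rw [expMode, expMode, ← exp_conj, map_mul, conj_ofReal]

theorem expMode_zero_right (c : ℂ) (p : E) : expMode c p 0 = 1 := by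
  simp [expMode]

theorem two_pi_I_combination_expMode_eq_zero_iff {p : E} (hp : p ≠ 0) (u v : ℂ) :
    (∀ z, u * expMode (2 * π * I) p z + v * expMode (-(2 * π * I)) p z = 0) ↔
      u = 0 ∧ v = 0 := by
  refine ⟨fun h => ?_, by rintro ⟨rfl, rfl⟩ z; simp⟩
  have hsum : u + v = 0 := by simpa [expMode_zero_right] using h 0
  -- at `z₀` the phase `⟪p, z₀⟫` is a quarter period, where the two modes take the values `±I`
  set z₀ : E := (4 * ‖p‖ ^ 2)⁻¹ • p
  have hphase : inner ℝ p z₀ = 4⁻¹ := by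
    have : ‖p‖ ≠ 0 := norm_ne_zero_iff.mpr hp
    rw [real_inner_smul_right, real_inner_self_eq_norm_sq]
    field_simp
  have hquarter (s : ℂ) : expMode (s * (2 * π * I)) p z₀ = cexp (s * (π / 2) * I) := by
    rw [expMode, hphase]; push_cast; ring_nf
  have hplus : expMode (2 * π * I) p z₀ = I := by
    simpa [exp_mul_I, Complex.cos_pi_div_two, Complex.sin_pi_div_two] using hquarter 1
  have hminus : expMode (-(2 * π * I)) p z₀ = -I := by
    simpa [Complex.exp_neg, exp_mul_I, Complex.cos_pi_div_two, Complex.sin_pi_div_two]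
      using hquarter (-1)
  have hdiff : u - v = 0 := by
    have := h z₀
    rw [hplus, hminus] at this
    linear_combination -I * this + (u - v) * I_sq
  constructor
  · linear_combination (hsum + hdiff) / 2
  · linear_combination (hsum - hdiff) / 2

end ExpMode

theorem laplacian_expMode (c p z : ℂ) :
    laplacian (expMode c p) z = c ^ 2 * (‖p‖ : ℂ) ^ 2 * expMode c p z := by
  have hnorm : (‖p‖ : ℂ) ^ 2 = (p.re : ℂ) ^ 2 + (p.im : ℂ) ^ 2 := by
    exact_mod_cast (Complex.sq_norm p).trans (Complex.normSq_apply p) |>.trans (by ring)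
  simp only [laplacian, fderiv_fderiv_expMode_apply, Complex.inner, one_mul, conj_re, conj_im,
    mul_re, I_re, I_im, zero_mul, zero_sub, neg_neg, hnorm]
  ring

theorem jacobi_eigen_equation_fourier_mode (α β p : ℂ) (hp : p ≠ 0) (a b : ℂ) (lam : ℝ)
    (f : ℂ → ℂ)
    (hf : ∀ z : ℂ, f z =
      a * Complex.exp (2 * (π : ℂ) * Complex.I * ((z * (starRingEnd ℂ) p).re : ℂ)) +
        b * Complex.exp (-(2 * (π : ℂ) * Complex.I * ((z * (starRingEnd ℂ) p).re : ℂ)))) :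
    (∀ z : ℂ,
        laplacian f z + 8 * (‖α‖ : ℂ) ^ 2 * f z +
            8 * α * (starRingEnd ℂ) β * (starRingEnd ℂ) (f z) =
          -4 * (lam : ℂ) * f z) ↔
      ((4 * (π : ℂ) ^ 2 * (‖p‖ : ℂ) ^ 2 - 8 * (‖α‖ : ℂ) ^ 2 - 4 * (lam : ℂ)) * a
          = 8 * α * (starRingEnd ℂ) β * (starRingEnd ℂ) b ∧
        (4 * (π : ℂ) ^ 2 * (‖p‖ : ℂ) ^ 2 - 8 * (‖α‖ : ℂ) ^ 2 - 4 * (lam : ℂ)) * b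
          = 8 * α * (starRingEnd ℂ) β * (starRingEnd ℂ) a) := by
  set c : ℂ := 2 * π * I
  set A : ℂ := 4 * π ^ 2 * ‖p‖ ^ 2 - 8 * ‖α‖ ^ 2 - 4 * lam
  set B : ℂ := 8 * α * conj β
  have hf' : f = fun z => a * expMode c p z + b * expMode (-c) p z := by
    funext z; simp only [hf, expMode, Complex.inner, neg_mul]
  have hc_sq : c ^ 2 = -(4 * π ^ 2) := by simp only [c, mul_pow, I_sq]; ring
  have hc_conj : conj c = -c := by simp [c, map_ofNat]
  have hmodes (z : ℂ) : laplacian f z + 8 * ‖α‖ ^ 2 * f z + B * conj (f z) - -4 * lam * f z =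
      (B * conj b - A * a) * expMode c p z + (B * conj a - A * b) * expMode (-c) p z := by
    rw [hf', laplacian_linear_combination (contDiff_expMode c p) (contDiff_expMode (-c) p),
      laplacian_expMode, laplacian_expMode]
    simp only [map_add, map_mul, map_neg, conj_expMode, hc_conj, neg_neg, neg_sq, hc_sq, A]
    ring
  calc (∀ z, _ = _)
      ↔ ∀ z, (B * conj b - A * a) * expMode c p z + (B * conj a - A * b) * expMode (-c) p z = 0 :=
        forall_congr' fun z => by rw [← hmodes, sub_eq_zero]
    _ ↔ _ := by
      rw [two_pi_I_combination_expMode_eq_zero_iff hp, sub_eq_zero, sub_eq_zero, eq_comm,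
        eq_comm (a := B * conj a)]
end
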